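/- For the Gaussian measurement model, the centroid condition simplifies to a_k = I_k^I / (I_k^I + I_k^II), i.e., the optimal representation point for a region equals the conditional mean of P₀ on that region divided by the total probability of the region. -/

import Mathlib

/-!
Both error probabilities are the Gaussian tail `Q` evaluated at `m ± s T`, where
`T = log (c₁₀ a / (c₀₁ (1 - a)))` is the log-odds threshold and `m = μ / (2σ)`, `s = σ / μ`, so
`2 m s = 1`. Differentiating through `Q' = -φ / √(2π)`, the centroid condition becomes
`c₁₀ I^I φ(m + sT) = c₀₁ I^II φ(m - sT)`, and `φ(m + sT) / φ(m - sT) = exp (-2 m s T) = exp (-T)`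
is exactly the inverse odds `c₀₁ (1 - a) / (c₁₀ a)`. The condition thus collapses to
`I^I (1 - a) = I^II a`.
-/

open MeasureTheory Set

theorem hasDerivAt_integral_Ioi {E : Type*} [NormedAddCommGroup E] [NormedSpace ℝ E]
    [CompleteSpace E] {f : ℝ → E} (hf : Integrable f) {α : ℝ} (hfα : ContinuousAt f α) :
    HasDerivAt (fun t => ∫ x in Ioi t, f x) (-f α) α := by
  have hsplit : (fun t => ∫ x in Ioi t, f x) = fun t => (∫ x in Ioi α, f x) - ∫ x in α..t, f x :=
    funext fun t => eq_sub_of_add_eq'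
      (intervalIntegral.integral_interval_add_Ioi hf.integrableOn hf.integrableOn)
  rw [hsplit]
  exact (intervalIntegral.integral_hasDerivAt_right hf.intervalIntegrable
    hf.aestronglyMeasurable.stronglyMeasurableAtFilter hfα).const_sub _

theorem hasDerivAt_gaussianTail (α : ℝ) :
    HasDerivAt (fun t => (1 / √(2 * Real.pi)) * ∫ x in Ioi t, Real.exp (-x ^ 2 / 2))
      (-(1 / √(2 * Real.pi)) * Real.exp (-α ^ 2 / 2)) α := by
  have hint : Integrable fun x : ℝ => Real.exp (-x ^ 2 / 2) := by
    convert integrable_exp_neg_mul_sq (b := 1 / 2) (by norm_num) using 3; ring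
  have hcont : Continuous fun x : ℝ => Real.exp (-x ^ 2 / 2) := by fun_prop
  exact ((hasDerivAt_integral_Ioi hint hcont.continuousAt).const_mul _).congr_deriv (by ring)

theorem hasDerivAt_log_odds {c₁ c₂ a : ℝ} (hc₁ : c₁ ≠ 0) (hc₂ : c₂ ≠ 0) (ha₀ : a ≠ 0)
    (ha₁ : a ≠ 1) :
    HasDerivAt (fun a => Real.log (c₁ * a / (c₂ * (1 - a)))) (1 / (a * (1 - a))) a := by
  have h1a : 1 - a ≠ 0 := sub_ne_zero.mpr (Ne.symm ha₁)
  have hnum : HasDerivAt (fun a => c₁ * a) c₁ a := by simpa using (hasDerivAt_id a).const_mul c₁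
  have hden : HasDerivAt (fun a => c₂ * (1 - a)) (-c₂) a := by
    simpa using ((hasDerivAt_id a).const_sub 1).const_mul c₂
  have hodds : HasDerivAt (fun a => c₁ * a / (c₂ * (1 - a)))
      ((c₁ * (c₂ * (1 - a)) - c₁ * a * -c₂) / (c₂ * (1 - a)) ^ 2) a :=
    hnum.div hden (mul_ne_zero hc₂ h1a)
  convert hodds.log (div_ne_zero (mul_ne_zero hc₁ ha₀) (mul_ne_zero hc₂ h1a)) using 1
  field_simp
  ring

theorem exp_neg_sq_half_add (m d : ℝ) :
    Real.exp (-(m + d) ^ 2 / 2) = Real.exp (-(m - d) ^ 2 / 2) * Real.exp (-(2 * m * d)) := by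
  rw [← Real.exp_add]; ring_nf

theorem eq_div_add_of_mul_one_sub_eq {I J a : ℝ} (hIJ : I + J ≠ 0) (h : I * (1 - a) = J * a) :
    a = I / (I + J) := by
  rw [eq_div_iff hIJ]; linarith

/-- In the Gaussian measurement model, the centroid condition simplifies to
`a_k = I_k^I / (I_k^I + I_k^II)`. -/
theorem gaussian_centroid
    (μ σ c10 c01 : ℝ) (hμ : 0 < μ) (hσ : 0 < σ) (hc10 : 0 < c10) (hc01 : 0 < c01)
    (Q : ℝ → ℝ)
    (hQ : ∀ α, Q α = (1 / Real.sqrt (2 * Real.pi)) *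
      ∫ x in Set.Ioi α, Real.exp (-x ^ 2 / 2))
    (pEI pEII : ℝ → ℝ)
    (hpEI : ∀ a, pEI a =
      Q (μ / (2 * σ) + (σ / μ) * Real.log (c10 * a / (c01 * (1 - a)))))
    (hpEII : ∀ a, pEII a =
      Q (μ / (2 * σ) - (σ / μ) * Real.log (c10 * a / (c01 * (1 - a)))))
    (IkI IkII : ℝ) (hIkI : 0 < IkI) (hIkII : 0 < IkII)
    (ak : ℝ) (hak : ak ∈ Set.Ioo (0:ℝ) 1)
    (hcentroid : c10 * IkI * deriv pEI ak + c01 * IkII * deriv pEII ak = 0) :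
    ak = IkI / (IkI + IkII) := by
  obtain ⟨ha₀, ha₁⟩ := hak
  have h1a : 0 < 1 - ak := sub_pos.mpr ha₁
  set C := 1 / √(2 * Real.pi)
  set m := μ / (2 * σ)
  set s := σ / μ
  set T := Real.log (c10 * ak / (c01 * (1 - ak))) with hT
  set L := 1 / (ak * (1 - ak))
  have hQ' : ∀ α, HasDerivAt Q (-C * Real.exp (-α ^ 2 / 2)) α := fun α =>
    funext hQ ▸ hasDerivAt_gaussianTail α
  have hodds : HasDerivAt (fun a => Real.log (c10 * a / (c01 * (1 - a)))) L ak :=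
    hasDerivAt_log_odds hc10.ne' hc01.ne' ha₀.ne' ha₁.ne
  have hdI : deriv pEI ak = -C * Real.exp (-(m + s * T) ^ 2 / 2) * (s * L) := by
    rw [funext hpEI]; exact ((hQ' _).comp ak ((hodds.const_mul s).const_add m)).deriv
  have hdII : deriv pEII ak = -C * Real.exp (-(m - s * T) ^ 2 / 2) * -(s * L) := by
    rw [funext hpEII]; exact ((hQ' _).comp ak ((hodds.const_mul s).const_sub m)).deriv
  have hratio : c10 * ak * Real.exp (-(m + s * T) ^ 2 / 2) =
      c01 * (1 - ak) * Real.exp (-(m - s * T) ^ 2 / 2) := by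
    have hms : 2 * m * (s * T) = T := by simp only [m, s]; field_simp
    rw [exp_neg_sq_half_add, hms, Real.exp_neg, hT, Real.exp_log (by positivity)]
    field_simp
  rw [hdI, hdII] at hcentroid
  have hfactor : C * Real.exp (-(m - s * T) ^ 2 / 2) * (s * L) * c01 *
      (IkI * (1 - ak) - IkII * ak) = 0 := by
    linear_combination (-ak) * hcentroid - C * s * L * IkI * hratio
  have hbalance : IkI * (1 - ak) = IkII * ak :=
    sub_eq_zero.mp ((mul_eq_zero.mp hfactor).resolve_left (by positivity))
  exact eq_div_add_of_mul_one_sub_eq (by positivity) hbalance
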